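/- arXiv:2603.02577 — 2 statements merged into one kernel-verified Lean document; each statement's English description precedes it below -/
import Mathlib

section
/- TD(0) with i.i.d. sampling and a constant step-size: let ((s_t, s_t'))_{t≥1} be i.i.d. random pairs with joint law ℙ(s_t = s, s_t' = s') = μ(s)P(s,s'), and define random iterates w_{t+1} = w_t + η g_{s_t, s_t'}(w_t) from a deterministic w_1 ∈ ℝ^d, with constant step-size 0 < η ≤ (1−γ)/8. Then for every T, E[‖w_{T+1} − w*‖²] ≤ exp(−η(1−γ)ω T) · ‖w_1 − w*‖² + 2ησ²/((1−γ)ω), where σ² = ∑_{s,s'} μ(s)P(s,s') ‖g_{s,s'}(w*)‖². -/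
/-!
Stationarity of `μ` makes the mean-path direction strongly monotone: writing `a(s) = ⟪w − w*, φ s⟫`,
`⟪w − w*, g(w) − g(w*)⟫ ≤ −(1 − γ) ∑ μ a² ≤ −(1 − γ) ω ‖w − w*‖²`, while the second moment of
`g_{s,s'}(w)` is at most `8 ∑ μ a² + 2σ²`. With `8η ≤ 1 − γ` the second-order term is absorbed, so
one step from any deterministic point gives
`E‖w + η g_{s,s'}(w) − w*‖² ≤ (1 − η(1 − γ)ω) ‖w − w*‖² + 2η²σ²`.
Since `w_{T+1}` depends only on the first `T` i.i.d. samples, conditioning on the past turns this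
into the same recursion for `E‖w_t − w*‖²`, which unrolls to the claim.

Nothing is assumed about the measurable structure on `S`, so the cylinder sets need not be
measurable; but they partition the path space and their outer measures add up to `1`, which
forces each to be null-measurable and lets the expectation be computed as a finite sum.
-/

open scoped RealInnerProductSpace BigOperators
open MeasureTheory

/-- The TD(0) update direction for a transition `(s, s')`:
`g_{s,s'}(w) = (r(s) + γ ⟪w, φ s'⟫ − ⟪w, φ s⟫) φ(s)`. -/
noncomputable def tdDir {S : Type*} {d : ℕ} (φ : S → EuclideanSpace ℝ (Fin d))
    (r : S → ℝ) (γ : ℝ) (s s' : S) (w : EuclideanSpace ℝ (Fin d)) :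
    EuclideanSpace ℝ (Fin d) :=
  (r s + γ * ⟪w, φ s'⟫ - ⟪w, φ s⟫) • φ s

/-- The mean-path TD(0) direction `g(w) = ∑_{s,s'} μ(s) P(s,s') g_{s,s'}(w)`. -/
noncomputable def meanDir {S : Type*} [Fintype S] {d : ℕ}
    (P : S → S → ℝ) (μ : S → ℝ) (φ : S → EuclideanSpace ℝ (Fin d))
    (r : S → ℝ) (γ : ℝ) (w : EuclideanSpace ℝ (Fin d)) :
    EuclideanSpace ℝ (Fin d) :=
  ∑ s, ∑ s', (μ s * P s s') • tdDir φ r γ s s' w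

section Markov

variable {S : Type*} [Fintype S] {P : S → S → ℝ} {μ : S → ℝ}

theorem sum_sum_mul_apply_fst (hProw : ∀ s, ∑ s', P s s' = 1) (f : S → ℝ) :
    ∑ s, ∑ s', μ s * P s s' * f s = ∑ s, μ s * f s := by
  refine Finset.sum_congr rfl fun s _ => ?_
  rw [← Finset.sum_mul, ← Finset.mul_sum, hProw, mul_one]

theorem sum_sum_mul_apply_snd (hstat : ∀ s', ∑ s, μ s * P s s' = μ s') (f : S → ℝ) :
    ∑ s, ∑ s', μ s * P s s' * f s' = ∑ s', μ s' * f s' := by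
  rw [Finset.sum_comm]
  simp_rw [← Finset.sum_mul, hstat]

end Markov

section TD

variable {S : Type*} {d : ℕ} {φ : S → EuclideanSpace ℝ (Fin d)} {r : S → ℝ} {γ : ℝ}

theorem tdDir_sub_tdDir (s s' : S) (w w' : EuclideanSpace ℝ (Fin d)) :
    tdDir φ r γ s s' w - tdDir φ r γ s s' w' =
      (γ * ⟪w - w', φ s'⟫ - ⟪w - w', φ s⟫) • φ s := by
  simp only [tdDir, ← sub_smul, inner_sub_left]
  ring_nf

theorem norm_tdDir_sub_tdDir_sq_le (hφ : ∀ s, ‖φ s‖ ≤ 1) (hγ : |γ| ≤ 1) (s s' : S)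
    (w w' : EuclideanSpace ℝ (Fin d)) :
    ‖tdDir φ r γ s s' w - tdDir φ r γ s s' w'‖ ^ 2 ≤
      2 * ⟪w - w', φ s'⟫ ^ 2 + 2 * ⟪w - w', φ s⟫ ^ 2 := by
  set a := ⟪w - w', φ s'⟫
  set b := ⟪w - w', φ s⟫
  have hγ2 : γ ^ 2 ≤ 1 := by nlinarith [abs_nonneg γ, sq_abs γ]
  have hφ2 : ‖φ s‖ ^ 2 ≤ 1 := pow_le_one₀ (norm_nonneg _) (hφ s)
  rw [tdDir_sub_tdDir, norm_smul, mul_pow, Real.norm_eq_abs, sq_abs]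
  calc (γ * a - b) ^ 2 * ‖φ s‖ ^ 2 ≤ (γ * a - b) ^ 2 :=
        mul_le_of_le_one_right (sq_nonneg _) hφ2
    _ ≤ 2 * a ^ 2 + 2 * b ^ 2 := by
        nlinarith [sq_nonneg (γ * a + b), mul_le_mul_of_nonneg_right hγ2 (sq_nonneg a)]

variable [Fintype S] {P : S → S → ℝ} {μ : S → ℝ}

theorem inner_meanDir (v w : EuclideanSpace ℝ (Fin d)) :
    ⟪v, meanDir P μ φ r γ w⟫ = ∑ s, ∑ s', μ s * P s s' * ⟪v, tdDir φ r γ s s' w⟫ := by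
  simp only [meanDir, inner_sum, real_inner_smul_right]

/-- `(γ a' − a) a ≤ γ a'²/2 + γ a²/2 − a²`, and stationarity turns both squares into the
same weighted sum. -/
theorem inner_sub_meanDir_sub_le (hP : ∀ s s', 0 ≤ P s s') (hμ : ∀ s, 0 ≤ μ s)
    (hProw : ∀ s, ∑ s', P s s' = 1) (hstat : ∀ s', ∑ s, μ s * P s s' = μ s') (hγ : 0 ≤ γ)
    (w w' : EuclideanSpace ℝ (Fin d)) :
    ⟪w - w', meanDir P μ φ r γ w - meanDir P μ φ r γ w'⟫ ≤
      -((1 - γ) * ∑ s, μ s * ⟪w - w', φ s⟫ ^ 2) := by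
  set a : S → ℝ := fun s => ⟪w - w', φ s⟫
  have hpoint : ∀ s s', μ s * P s s' * ⟪w - w', tdDir φ r γ s s' w - tdDir φ r γ s s' w'⟫ ≤
      μ s * P s s' * (γ / 2 * a s' ^ 2) + μ s * P s s' * ((γ / 2 - 1) * a s ^ 2) := by
    intro s s'
    rw [tdDir_sub_tdDir, real_inner_smul_right, ← mul_add]
    refine mul_le_mul_of_nonneg_left ?_ (mul_nonneg (hμ s) (hP s s'))
    nlinarith [mul_nonneg hγ (sq_nonneg (a s' - a s))]
  calc ⟪w - w', meanDir P μ φ r γ w - meanDir P μ φ r γ w'⟫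
      = ∑ s, ∑ s', μ s * P s s' * ⟪w - w', tdDir φ r γ s s' w - tdDir φ r γ s s' w'⟫ := by
        simp only [inner_sub_right, inner_meanDir, mul_sub, Finset.sum_sub_distrib]
    _ ≤ ∑ s, ∑ s', (μ s * P s s' * (γ / 2 * a s' ^ 2) + μ s * P s s' * ((γ / 2 - 1) * a s ^ 2)) :=
        Finset.sum_le_sum fun s _ => Finset.sum_le_sum fun s' _ => hpoint s s'
    _ = -((1 - γ) * ∑ s, μ s * a s ^ 2) := by
        simp only [Finset.sum_add_distrib, sum_sum_mul_apply_snd hstat,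
          sum_sum_mul_apply_fst hProw, mul_left_comm (μ _), ← Finset.mul_sum]
        ring

theorem sum_sum_norm_tdDir_sq_le (hP : ∀ s s', 0 ≤ P s s') (hμ : ∀ s, 0 ≤ μ s)
    (hProw : ∀ s, ∑ s', P s s' = 1) (hstat : ∀ s', ∑ s, μ s * P s s' = μ s')
    (hφ : ∀ s, ‖φ s‖ ≤ 1) (hγ : |γ| ≤ 1) (w w' : EuclideanSpace ℝ (Fin d)) :
    ∑ s, ∑ s', μ s * P s s' * ‖tdDir φ r γ s s' w‖ ^ 2 ≤
      8 * ∑ s, μ s * ⟪w - w', φ s⟫ ^ 2 +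
        2 * ∑ s, ∑ s', μ s * P s s' * ‖tdDir φ r γ s s' w'‖ ^ 2 := by
  set a : S → ℝ := fun s => ⟪w - w', φ s⟫
  have hpoint : ∀ s s', ‖tdDir φ r γ s s' w‖ ^ 2 ≤
      4 * a s' ^ 2 + 4 * a s ^ 2 + 2 * ‖tdDir φ r γ s s' w'‖ ^ 2 := by
    intro s s'
    have hdiff := norm_tdDir_sub_tdDir_sq_le (r := r) hφ hγ s s' w w'
    calc ‖tdDir φ r γ s s' w‖ ^ 2
        ≤ (‖tdDir φ r γ s s' w - tdDir φ r γ s s' w'‖ + ‖tdDir φ r γ s s' w'‖) ^ 2 :=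
          pow_le_pow_left₀ (norm_nonneg _) (norm_le_norm_sub_add _ _) 2
      _ ≤ 2 * (‖tdDir φ r γ s s' w - tdDir φ r γ s s' w'‖ ^ 2 + ‖tdDir φ r γ s s' w'‖ ^ 2) :=
          add_sq_le
      _ ≤ 4 * a s' ^ 2 + 4 * a s ^ 2 + 2 * ‖tdDir φ r γ s s' w'‖ ^ 2 := by linarith
  calc ∑ s, ∑ s', μ s * P s s' * ‖tdDir φ r γ s s' w‖ ^ 2
      ≤ ∑ s, ∑ s', (μ s * P s s' * (4 * a s' ^ 2) + μ s * P s s' * (4 * a s ^ 2) +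
          2 * (μ s * P s s' * ‖tdDir φ r γ s s' w'‖ ^ 2)) := by
        refine Finset.sum_le_sum fun s _ => Finset.sum_le_sum fun s' _ => ?_
        nlinarith [mul_le_mul_of_nonneg_left (hpoint s s') (mul_nonneg (hμ s) (hP s s'))]
    _ = 8 * ∑ s, μ s * a s ^ 2 + 2 * ∑ s, ∑ s', μ s * P s s' * ‖tdDir φ r γ s s' w'‖ ^ 2 := by
        simp only [Finset.sum_add_distrib, sum_sum_mul_apply_snd hstat,
          sum_sum_mul_apply_fst hProw, mul_left_comm (μ _), ← Finset.mul_sum]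
        ring

theorem sum_sum_norm_add_smul_tdDir_sub_sq_le (hP : ∀ s s', 0 ≤ P s s') (hμ : ∀ s, 0 ≤ μ s)
    (hProw : ∀ s, ∑ s', P s s' = 1) (hμsum : ∑ s, μ s = 1)
    (hstat : ∀ s', ∑ s, μ s * P s s' = μ s') (hφ : ∀ s, ‖φ s‖ ≤ 1) (hγ : 0 ≤ γ) {ω η : ℝ}
    (hcov : ∀ v : EuclideanSpace ℝ (Fin d), ω * ‖v‖ ^ 2 ≤ ∑ s, μ s * ⟪v, φ s⟫ ^ 2)
    (hη : 0 ≤ η) (hηγ : 8 * η ≤ 1 - γ) {wstar : EuclideanSpace ℝ (Fin d)}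
    (hstar : meanDir P μ φ r γ wstar = 0) (w : EuclideanSpace ℝ (Fin d)) :
    ∑ s, ∑ s', μ s * P s s' * ‖w + η • tdDir φ r γ s s' w - wstar‖ ^ 2 ≤
      (1 - η * (1 - γ) * ω) * ‖w - wstar‖ ^ 2 +
        2 * η ^ 2 * ∑ s, ∑ s', μ s * P s s' * ‖tdDir φ r γ s s' wstar‖ ^ 2 := by
  set v := w - wstar
  set A := ∑ s, μ s * ⟪v, φ s⟫ ^ 2
  have hexpand : ∑ s, ∑ s', μ s * P s s' * ‖w + η • tdDir φ r γ s s' w - wstar‖ ^ 2 =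
      ‖v‖ ^ 2 + 2 * η * ⟪v, meanDir P μ φ r γ w - meanDir P μ φ r γ wstar⟫ +
        η ^ 2 * ∑ s, ∑ s', μ s * P s s' * ‖tdDir φ r γ s s' w‖ ^ 2 := by
    have hpoint : ∀ s s', ‖w + η • tdDir φ r γ s s' w - wstar‖ ^ 2 =
        ‖v‖ ^ 2 + 2 * η * ⟪v, tdDir φ r γ s s' w⟫ + η ^ 2 * ‖tdDir φ r γ s s' w‖ ^ 2 := by
      intro s s'
      rw [add_sub_right_comm, norm_add_sq_real, real_inner_smul_right, norm_smul,
        Real.norm_eq_abs, mul_pow, sq_abs]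
      ring
    simp only [hpoint, mul_add, Finset.sum_add_distrib, ← Finset.sum_mul, hstar, sub_zero,
      inner_meanDir]
    simp only [mul_left_comm _ (2 * η), mul_left_comm _ (η ^ 2), ← Finset.mul_sum, hProw,
      mul_one, hμsum, one_mul]
  have hA : 0 ≤ A := Finset.sum_nonneg fun s _ => mul_nonneg (hμ s) (sq_nonneg _)
  have hdrift := inner_sub_meanDir_sub_le (φ := φ) (r := r) hP hμ hProw hstat hγ w wstar
  have hγ1 : |γ| ≤ 1 := abs_le.2 ⟨by linarith, by linarith⟩
  have hsecond := sum_sum_norm_tdDir_sq_le (r := r) hP hμ hProw hstat hφ hγ1 w wstar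
  have hcovv := hcov v
  rw [hexpand]
  nlinarith [mul_le_mul_of_nonneg_left hdrift (by positivity : 0 ≤ 2 * η),
    mul_le_mul_of_nonneg_left hsecond (sq_nonneg η),
    mul_le_mul_of_nonneg_left hcovv (by nlinarith : 0 ≤ η * (1 - γ)),
    mul_le_mul_of_nonneg_right (by nlinarith : 8 * η ^ 2 ≤ η * (1 - γ)) hA]

end TD

section IIDPath

variable {α E : Type*}

def iterateAlong (step : α → E → E) (x₀ : E) {t : ℕ} (q : Fin t → α) : E :=
  Fin.foldl t (fun x j => step (q j) x) x₀

@[simp]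
theorem iterateAlong_zero (step : α → E → E) (x₀ : E) (q : Fin 0 → α) :
    iterateAlong step x₀ q = x₀ := rfl

theorem iterateAlong_snoc (step : α → E → E) (x₀ : E) {t : ℕ} (q : Fin t → α) (a : α) :
    iterateAlong step x₀ (Fin.snoc q a : Fin (t + 1) → α) = step a (iterateAlong step x₀ q) := by
  simp [iterateAlong, Fin.foldl_succ_last]

variable [Fintype α]

theorem sum_prod_apply_eq_one {p : α → ℝ} (hpsum : ∑ a, p a = 1) (t : ℕ) :
    ∑ q : Fin t → α, ∏ j, p (q j) = 1 := by
  classical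
  rw [← Fintype.prod_sum]
  simp [hpsum]

theorem sum_prod_mul_snoc (p : α → ℝ) {t : ℕ} (F : (Fin (t + 1) → α) → ℝ) :
    ∑ q : Fin (t + 1) → α, (∏ j, p (q j)) * F q =
      ∑ q : Fin t → α, (∏ j, p (q j)) * ∑ a, p a * F (Fin.snoc q a) := by
  rw [← (Fin.snocEquiv fun _ => α).sum_comp, Fintype.sum_prod_type, Finset.sum_comm]
  simp [Fin.snocEquiv, Fin.prod_univ_castSucc, Finset.mul_sum, mul_assoc, mul_left_comm]

theorem sum_prod_mul_iterateAlong_le {p : α → ℝ} (hp : ∀ a, 0 ≤ p a) (hpsum : ∑ a, p a = 1)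
    {step : α → E → E} {V : E → ℝ} {ρ c : ℝ} (hρ : 0 ≤ ρ)
    (hdrift : ∀ x, ∑ a, p a * V (step a x) ≤ ρ * V x + c) (x₀ : E) (t : ℕ) :
    ∑ q : Fin t → α, (∏ j, p (q j)) * V (iterateAlong step x₀ q) ≤
      ρ ^ t * V x₀ + c * ∑ k ∈ Finset.range t, ρ ^ k := by
  induction t with
  | zero => simp
  | succ t ih =>
    have hweights : ∀ q : Fin t → α, 0 ≤ ∏ j, p (q j) :=
      fun q => Finset.prod_nonneg fun j _ => hp (q j)
    calc ∑ q : Fin (t + 1) → α, (∏ j, p (q j)) * V (iterateAlong step x₀ q)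
        = ∑ q : Fin t → α, (∏ j, p (q j)) * ∑ a, p a * V (step a (iterateAlong step x₀ q)) := by
          simp only [sum_prod_mul_snoc, iterateAlong_snoc]
      _ ≤ ∑ q : Fin t → α, (∏ j, p (q j)) * (ρ * V (iterateAlong step x₀ q) + c) :=
          Finset.sum_le_sum fun q _ => mul_le_mul_of_nonneg_left (hdrift _) (hweights q)
      _ = ρ * ∑ q : Fin t → α, (∏ j, p (q j)) * V (iterateAlong step x₀ q) + c := by
          simp only [mul_add, Finset.sum_add_distrib, ← Finset.sum_mul,
            sum_prod_apply_eq_one hpsum, one_mul, Finset.mul_sum, mul_left_comm ρ]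
      _ ≤ ρ * (ρ ^ t * V x₀ + c * ∑ k ∈ Finset.range t, ρ ^ k) + c := by gcongr
      _ = ρ ^ (t + 1) * V x₀ + c * ∑ k ∈ Finset.range (t + 1), ρ ^ k := by
          rw [geom_sum_succ]
          ring

end IIDPath

theorem one_sub_pow_mul_add_geom_sum_le {β a c : ℝ} (hβ : 0 < β) (hβ1 : β ≤ 1) (ha : 0 ≤ a)
    (hc : 0 ≤ c) (T : ℕ) :
    (1 - β) ^ T * a + c * ∑ k ∈ Finset.range T, (1 - β) ^ k ≤
      Real.exp (-(β * T)) * a + c / β := by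
  have hpow : (1 - β) ^ T ≤ Real.exp (-(β * T)) := by
    calc (1 - β) ^ T ≤ Real.exp (-β) ^ T :=
          pow_le_pow_left₀ (by linarith) (Real.one_sub_le_exp_neg β) T
      _ = Real.exp (-(β * T)) := by rw [← Real.exp_nat_mul]; ring_nf
  have hgeom : ∑ k ∈ Finset.range T, (1 - β) ^ k ≤ 1 / β := by
    have h := geom_sum_Ico_le_of_lt_one (m := 0) (n := T) (by linarith : 0 ≤ 1 - β)
      (by linarith)
    rwa [← Finset.range_eq_Ico, pow_zero, sub_sub_cancel] at h
  rw [← mul_one_div c β]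
  gcongr

section NullMeasurable

open Set

variable {X : Type*} [MeasurableSpace X] {μ : Measure X} [IsFiniteMeasure μ]

theorem nullMeasurableSet_of_measure_add_measure_compl_le {s : Set X}
    (h : μ s + μ sᶜ ≤ μ univ) : NullMeasurableSet s μ := by
  set t := toMeasurable μ s
  set t' := toMeasurable μ sᶜ
  have hunion : t ∪ t' = univ := eq_univ_of_forall fun x => by
    by_cases hx : x ∈ s
    · exact Or.inl (subset_toMeasurable μ s hx)
    · exact Or.inr (subset_toMeasurable μ sᶜ hx)
  have hinter : μ (t ∩ t') = 0 := by
    have hadd := measure_union_add_inter (μ := μ) t (measurableSet_toMeasurable μ sᶜ)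
    rw [hunion, measure_toMeasurable, measure_toMeasurable] at hadd
    have : μ univ + μ (t ∩ t') ≤ μ univ + 0 := by rw [hadd, add_zero]; exact h
    exact nonpos_iff_eq_zero.1 ((ENNReal.add_le_add_iff_left (measure_ne_top μ univ)).1 this)
  have hae : t =ᵐ[μ] s := by
    refine ae_eq_set.2 ⟨measure_mono_null (fun x hx => ?_) hinter, ?_⟩
    · exact ⟨hx.1, subset_toMeasurable μ sᶜ hx.2⟩
    · rw [sdiff_eq_empty.2 (subset_toMeasurable μ s), measure_empty]
  exact (measurableSet_toMeasurable μ s).nullMeasurableSet.congr hae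

theorem nullMeasurableSet_preimage_singleton_of_sum_le {ι : Type*} [Fintype ι] (f : X → ι)
    (hsum : ∑ i, μ (f ⁻¹' {i}) ≤ μ univ) (i : ι) : NullMeasurableSet (f ⁻¹' {i}) μ := by
  classical
  refine nullMeasurableSet_of_measure_add_measure_compl_le (le_trans ?_ hsum)
  rw [← Finset.add_sum_erase _ _ (Finset.mem_univ i)]
  gcongr
  refine le_trans (measure_mono fun x hx => ?_) (measure_biUnion_finset_le _ _)
  exact mem_biUnion (Finset.mem_erase.2 ⟨hx, Finset.mem_univ _⟩) rfl

theorem integral_comp_eq_sum_of_sum_measure_preimage_le {ι : Type*} [Fintype ι] (f : X → ι)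
    (hsum : ∑ i, μ (f ⁻¹' {i}) ≤ μ univ) (g : ι → ℝ) :
    ∫ x, g (f x) ∂μ = ∑ i, μ.real (f ⁻¹' {i}) * g i := by
  classical
  have hfibre := nullMeasurableSet_preimage_singleton_of_sum_le f hsum
  have hsplit : (fun x => g (f x)) = fun x => ∑ i, (f ⁻¹' {i}).indicator (fun _ => g i) x := by
    funext x
    simp [Set.indicator_apply]
  rw [hsplit, integral_finsetSum _ fun i _ => (integrable_const (g i)).indicator₀ (hfibre i)]
  simp only [integral_indicator₀ (hfibre _), setIntegral_const, smul_eq_mul]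

end NullMeasurable

section SamplePath

variable {α : Type*}

def samplePrefix (T : ℕ) (σ : ℕ → α) : Fin T → α := fun j => σ (j + 1)

theorem samplePrefix_succ (T : ℕ) (σ : ℕ → α) :
    samplePrefix (T + 1) σ = Fin.snoc (samplePrefix T σ) (σ (T + 1)) :=
  (Fin.snoc_init_self _).symm

theorem eq_iterateAlong_samplePrefix {E : Type*} {w : ℕ → (ℕ → α) → E} (step : α → E → E)
    {w1 : E} (hw1 : ∀ σ, w 1 σ = w1)
    (hrec : ∀ t, 1 ≤ t → ∀ σ, w (t + 1) σ = step (σ t) (w t σ)) (t : ℕ) (σ : ℕ → α) :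
    w (t + 1) σ = iterateAlong step w1 (samplePrefix t σ) := by
  induction t with
  | zero => exact hw1 σ
  | succ t ih => rw [hrec (t + 1) (by omega), ih, samplePrefix_succ, iterateAlong_snoc]

variable [MeasurableSpace α] (ℙ : Measure (ℕ → α)) [IsProbabilityMeasure ℙ] {p : α → ℝ}

theorem measure_samplePrefix_preimage (hp : ∀ a, 0 ≤ p a)
    (hiid : ∀ (n : ℕ) (q : ℕ → α), ℙ {σ | ∀ i, 1 ≤ i → i ≤ n → σ i = q i} =
      ∏ i ∈ Finset.Icc 1 n, ENNReal.ofReal (p (q i)))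
    {T : ℕ} (q : Fin T → α) :
    ℙ (samplePrefix T ⁻¹' {q}) = ENNReal.ofReal (∏ j, p (q j)) := by
  obtain ⟨σ₀⟩ := nonempty_of_isProbabilityMeasure ℙ
  have hinj : Function.Injective fun j : Fin T => (j : ℕ) + 1 :=
    fun i j h => Fin.ext (Nat.succ_injective h)
  set q' : ℕ → α := Function.extend (fun j : Fin T => (j : ℕ) + 1) q σ₀
  have hq' : ∀ j : Fin T, q' (j + 1) = q j := hinj.extend_apply q σ₀
  have hcyl : samplePrefix T ⁻¹' {q} = {σ | ∀ i, 1 ≤ i → i ≤ T → σ i = q' i} := by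
    ext σ
    simp only [Set.mem_preimage, Set.mem_singleton_iff, Set.mem_ofPred_eq, funext_iff,
      samplePrefix]
    constructor
    · rintro h (_ | i) h1 h2
      · omega
      · exact (h ⟨i, by omega⟩).trans (hq' ⟨i, by omega⟩).symm
    · exact fun h j => (h (j + 1) (by omega) (by omega)).trans (hq' j)
  rw [hcyl, hiid, ← Finset.Ico_add_one_right_eq_Icc, ← zero_add 1, ← Finset.prod_Ico_add',
    ← Finset.range_eq_Ico, ← Fin.prod_univ_eq_prod_range, ENNReal.ofReal_prod_of_nonneg
    fun j _ => hp (q j)]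
  simp only [hq']

theorem integral_comp_samplePrefix [Fintype α] (hp : ∀ a, 0 ≤ p a) (hpsum : ∑ a, p a = 1)
    (hiid : ∀ (n : ℕ) (q : ℕ → α), ℙ {σ | ∀ i, 1 ≤ i → i ≤ n → σ i = q i} =
      ∏ i ∈ Finset.Icc 1 n, ENNReal.ofReal (p (q i)))
    {T : ℕ} (g : (Fin T → α) → ℝ) :
    ∫ σ, g (samplePrefix T σ) ∂ℙ = ∑ q, (∏ j, p (q j)) * g q := by
  have hweights : ∀ q : Fin T → α, 0 ≤ ∏ j, p (q j) :=
    fun q => Finset.prod_nonneg fun j _ => hp (q j)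
  have hmass : ∑ q, ℙ (samplePrefix T ⁻¹' {q}) = ℙ Set.univ := by
    rw [measure_univ, Finset.sum_congr rfl fun q _ => measure_samplePrefix_preimage ℙ hp hiid q,
      ← ENNReal.ofReal_sum_of_nonneg fun q _ => hweights q, sum_prod_apply_eq_one hpsum,
      ENNReal.ofReal_one]
  rw [integral_comp_eq_sum_of_sum_measure_preimage_le _ hmass.le]
  simp only [measureReal_def, measure_samplePrefix_preimage ℙ hp hiid,
    ENNReal.toReal_ofReal (hweights _)]

end SamplePath

theorem td0_iid_constant_step_general
    {S : Type*} [Fintype S] [MeasurableSpace S] {d : ℕ}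
    (P : S → S → ℝ) (μ : S → ℝ) (φ : S → EuclideanSpace ℝ (Fin d))
    (r : S → ℝ) (γ ω η : ℝ) (wstar : EuclideanSpace ℝ (Fin d))
    (hP : ∀ s s', 0 ≤ P s s') (hProw : ∀ s, ∑ s', P s s' = 1)
    (hμ : ∀ s, 0 ≤ μ s) (hμsum : ∑ s, μ s = 1)
    (hstat : ∀ s', ∑ s, μ s * P s s' = μ s')
    (hφ : ∀ s, ‖φ s‖ ≤ 1)
    (hγ : 0 < γ ∧ γ ≤ 1) (hω : 0 < ω ∧ ω ≤ 1)
    (hcov : ∀ v : EuclideanSpace ℝ (Fin d), ω * ‖v‖ ^ 2 ≤ ∑ s, μ s * ⟪v, φ s⟫ ^ 2)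
    (hstar : meanDir P μ φ r γ wstar = 0)
    (hη : 0 < η ∧ η ≤ (1 - γ) / 8)
    -- the law ℙ of the i.i.d. sample path `(s_t, s_t')_{t ≥ 1}`
    (ℙ : Measure (ℕ → S × S)) [IsProbabilityMeasure ℙ]
    (hiid : ∀ (n : ℕ) (q : ℕ → S × S),
      ℙ {σ | ∀ i, 1 ≤ i → i ≤ n → σ i = q i} =
        ∏ i ∈ Finset.Icc 1 n, ENNReal.ofReal (μ (q i).1 * P (q i).1 (q i).2))
    -- the TD(0) iterates along a sample path
    (w1 : EuclideanSpace ℝ (Fin d)) (w : ℕ → (ℕ → S × S) → EuclideanSpace ℝ (Fin d))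
    (hw1 : ∀ σ, w 1 σ = w1)
    (hrec : ∀ t, 1 ≤ t → ∀ σ,
      w (t + 1) σ = w t σ + η • tdDir φ r γ (σ t).1 (σ t).2 (w t σ))
    (T : ℕ) :
    ∫ σ, ‖w (T + 1) σ - wstar‖ ^ 2 ∂ℙ ≤
      Real.exp (-(η * (1 - γ) * ω * T)) * ‖w1 - wstar‖ ^ 2 +
        2 * η * (∑ s, ∑ s', μ s * P s s' * ‖tdDir φ r γ s s' wstar‖ ^ 2) /
          ((1 - γ) * ω) := by
  set p : S × S → ℝ := fun a => μ a.1 * P a.1 a.2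
  set step : S × S → EuclideanSpace ℝ (Fin d) → EuclideanSpace ℝ (Fin d) :=
    fun a x => x + η • tdDir φ r γ a.1 a.2 x
  set σ2 := ∑ s, ∑ s', μ s * P s s' * ‖tdDir φ r γ s s' wstar‖ ^ 2
  set β := η * (1 - γ) * ω with hβdef
  have hp : ∀ a, 0 ≤ p a := fun a => mul_nonneg (hμ a.1) (hP a.1 a.2)
  have hpsum : ∑ a, p a = 1 := by
    simp only [p, Fintype.sum_prod_type, ← Finset.mul_sum, hProw, mul_one, hμsum]
  have hσ2 : 0 ≤ σ2 := Finset.sum_nonneg fun s _ => Finset.sum_nonneg fun s' _ =>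
    mul_nonneg (mul_nonneg (hμ s) (hP s s')) (sq_nonneg _)
  have h1γ : 0 < 1 - γ := by linarith
  have hβ : 0 < β ∧ β ≤ 1 := by
    have hηγ : η * (1 - γ) ≤ 1 := by nlinarith
    exact ⟨mul_pos (mul_pos hη.1 h1γ) hω.1, by nlinarith⟩
  have hdrift : ∀ x, ∑ a, p a * ‖step a x - wstar‖ ^ 2 ≤
      (1 - β) * ‖x - wstar‖ ^ 2 + 2 * η ^ 2 * σ2 := fun x => by
    rw [Fintype.sum_prod_type]
    exact sum_sum_norm_add_smul_tdDir_sub_sq_le hP hμ hProw hμsum hstat hφ hγ.1.le hcov hη.1.le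
      (by linarith) hstar x
  have hiter : ∀ σ, w (T + 1) σ = iterateAlong step w1 (samplePrefix T σ) :=
    eq_iterateAlong_samplePrefix step hw1 hrec T
  calc ∫ σ, ‖w (T + 1) σ - wstar‖ ^ 2 ∂ℙ
      = ∑ q, (∏ j, p (q j)) * ‖iterateAlong step w1 q - wstar‖ ^ 2 := by
        simp only [hiter]
        exact integral_comp_samplePrefix ℙ hp hpsum hiid
          (fun q => ‖iterateAlong step w1 q - wstar‖ ^ 2)
    _ ≤ (1 - β) ^ T * ‖w1 - wstar‖ ^ 2 + 2 * η ^ 2 * σ2 * ∑ k ∈ Finset.range T, (1 - β) ^ k :=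
        sum_prod_mul_iterateAlong_le (V := fun x => ‖x - wstar‖ ^ 2) hp hpsum (by linarith)
          hdrift w1 T
    _ ≤ Real.exp (-(β * T)) * ‖w1 - wstar‖ ^ 2 + 2 * η ^ 2 * σ2 / β :=
        one_sub_pow_mul_add_geom_sum_le hβ.1 hβ.2 (sq_nonneg _) (by positivity) T
    _ = _ := by
        congr 1
        rw [div_eq_div_iff hβ.1.ne' (mul_pos h1γ hω.1).ne', hβdef]
        ring

/-- TD(0) with i.i.d. sampling from the stationary distribution and a
constant step-size `0 < η ≤ (1−γ)/8` satisfies, for every horizon `T`,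
`E[‖w_{T+1} − w*‖²] ≤ exp(−η(1−γ)ω T) ‖w_1 − w*‖² + 2ησ²/((1−γ)ω)`.
The i.i.d. law of the sample path `(s_t, s_t')_{t ≥ 1}` is encoded through its
cylinder probabilities. -/
theorem td0_iid_constant_step
    {S : Type*} [Fintype S] [MeasurableSpace S] {d : ℕ}
    (P : S → S → ℝ) (μ : S → ℝ) (φ : S → EuclideanSpace ℝ (Fin d))
    (r : S → ℝ) (γ ω η : ℝ) (wstar : EuclideanSpace ℝ (Fin d))
    (hP : ∀ s s', 0 ≤ P s s') (hProw : ∀ s, ∑ s', P s s' = 1)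
    (hμ : ∀ s, 0 ≤ μ s) (hμsum : ∑ s, μ s = 1)
    (hstat : ∀ s', ∑ s, μ s * P s s' = μ s')
    (hφ : ∀ s, ‖φ s‖ ≤ 1)
    (hr : ∀ s, 0 ≤ r s ∧ r s ≤ 1)
    (hγ : 0 < γ ∧ γ ≤ 1) (hω : 0 < ω ∧ ω ≤ 1)
    (hcov : ∀ v : EuclideanSpace ℝ (Fin d), ω * ‖v‖ ^ 2 ≤ ∑ s, μ s * ⟪v, φ s⟫ ^ 2)
    (hstar : meanDir P μ φ r γ wstar = 0)
    (hη : 0 < η ∧ η ≤ (1 - γ) / 8)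
    -- the law ℙ of the i.i.d. sample path `(s_t, s_t')_{t ≥ 1}`
    (ℙ : Measure (ℕ → S × S)) [IsProbabilityMeasure ℙ]
    (hiid : ∀ (n : ℕ) (q : ℕ → S × S),
      ℙ {σ | ∀ i, 1 ≤ i → i ≤ n → σ i = q i} =
        ∏ i ∈ Finset.Icc 1 n, ENNReal.ofReal (μ (q i).1 * P (q i).1 (q i).2))
    -- the TD(0) iterates along a sample path
    (w1 : EuclideanSpace ℝ (Fin d)) (w : ℕ → (ℕ → S × S) → EuclideanSpace ℝ (Fin d))
    (hw1 : ∀ σ, w 1 σ = w1)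
    (hrec : ∀ t, 1 ≤ t → ∀ σ,
      w (t + 1) σ = w t σ + η • tdDir φ r γ (σ t).1 (σ t).2 (w t σ))
    (T : ℕ) :
    ∫ σ, ‖w (T + 1) σ - wstar‖ ^ 2 ∂ℙ ≤
      Real.exp (-(η * (1 - γ) * ω * T)) * ‖w1 - wstar‖ ^ 2 +
        2 * η * (∑ s, ∑ s', μ s * P s s' * ‖tdDir φ r γ s s' wstar‖ ^ 2) /
          ((1 - γ) * ω) :=
  td0_iid_constant_step_general P μ φ r γ ω η wstar hP hProw hμ hμsum hstat hφ hγ hω hcov hstar hη ℙ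
    hiid w1 w hw1 hrec T
end

section
/- Base case: regularized TD(0) iterates stay bounded up to the mixing time. For any sequence of transitions (s_t, s_t') ∈ S × S, define w_{t+1} = w_t + η_t g^r_{s_t, s_t'}(w_t) with exponential step-sizes η_t = η₀ α^t, α = (1/T)^{1/T}, where η₀ ≤ (1−γ)/(16 ln T) and T ≥ max{3, 1/η₀}. Then for all t ≤ τ_mix, ‖w_t − w_r*‖² ≤ B(τ_mix) := exp(2(2+λ) max{a, b}) · (‖w_1 − w_r*‖ + ζ)². -/
/-!
The regularized TD direction grows at most linearly, `‖g^r(w)‖ ≤ 1 + (2 + λ)‖w‖`, so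
`D_t = ‖w_t − w_r*‖ + ζ` obeys `D_{t+1} ≤ (1 + (3 + λ) η₀) D_t` whatever the transitions are, and
hence `D_t ≤ exp((3 + λ) η₀ (t − 1)) D_1`. Minimality of `τ_mix` gives
`τ_mix − 1 ≤ b + a ln T' ≤ b + 2 a ln T`, and `η₀ ≤ 1/16`, `η₀ ln T ≤ 1/16` bound the exponent
by `(2 + λ) max{a, b}`.
-/

open scoped RealInnerProductSpace BigOperators

/-- The regularized stochastic TD(0) direction `g^r_{s,s'}(w) = g_{s,s'}(w) − λ w`. -/
noncomputable def regTdDir {S : Type*} {d : ℕ} (φ : S → EuclideanSpace ℝ (Fin d))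
    (r : S → ℝ) (γ lam : ℝ) (s s' : S) (w : EuclideanSpace ℝ (Fin d)) :
    EuclideanSpace ℝ (Fin d) :=
  tdDir φ r γ s s' w - lam • w

/-- The regularized mean-path TD(0) direction `g^r(w) = g(w) − λ w`. -/
noncomputable def regMeanDir {S : Type*} [Fintype S] {d : ℕ}
    (P : S → S → ℝ) (μ : S → ℝ) (φ : S → EuclideanSpace ℝ (Fin d))
    (r : S → ℝ) (γ lam : ℝ) (w : EuclideanSpace ℝ (Fin d)) :
    EuclideanSpace ℝ (Fin d) :=
  meanDir P μ φ r γ w - lam • w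

/-- One step of the distribution dynamics: `(ν P)(s') = ∑_s ν(s) P(s,s')`. -/
noncomputable def pushDist {S : Type*} [Fintype S] (P : S → S → ℝ) (ν : S → ℝ) : S → ℝ :=
  fun s' => ∑ s, ν s * P s s'

open Real

theorem norm_regTdDir_le {S : Type*} {d : ℕ} {φ : S → EuclideanSpace ℝ (Fin d)} {r : S → ℝ}
    {γ lam : ℝ} {s s' : S} (hφs : ‖φ s‖ ≤ 1) (hφs' : ‖φ s'‖ ≤ 1) (hr : |r s| ≤ 1)
    (hγ : |γ| ≤ 1) (hlam : 0 ≤ lam) (w : EuclideanSpace ℝ (Fin d)) :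
    ‖regTdDir φ r γ lam s s' w‖ ≤ 1 + (2 + lam) * ‖w‖ := by
  have hinner : ∀ x : EuclideanSpace ℝ (Fin d), ‖x‖ ≤ 1 → |⟪w, x⟫| ≤ ‖w‖ := fun x hx =>
    (abs_real_inner_le_norm w x).trans (mul_le_of_le_one_right (norm_nonneg w) hx)
  have hcoef : |r s + γ * ⟪w, φ s'⟫ - ⟪w, φ s⟫| ≤ 1 + 2 * ‖w‖ := by
    have hγinner : |γ| * |⟪w, φ s'⟫| ≤ ‖w‖ :=
      (mul_le_of_le_one_left (abs_nonneg _) hγ).trans (hinner _ hφs')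
    calc |r s + γ * ⟪w, φ s'⟫ - ⟪w, φ s⟫|
        ≤ |r s| + |γ| * |⟪w, φ s'⟫| + |⟪w, φ s⟫| := by
          rw [← abs_mul]
          exact (abs_sub _ _).trans (by gcongr; exact abs_add_le _ _)
      _ ≤ 1 + 2 * ‖w‖ := by linarith [hinner _ hφs]
  calc ‖regTdDir φ r γ lam s s' w‖ ≤ ‖tdDir φ r γ s s' w‖ + ‖lam • w‖ := norm_sub_le _ _
    _ = |r s + γ * ⟪w, φ s'⟫ - ⟪w, φ s⟫| * ‖φ s‖ + lam * ‖w‖ := by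
      rw [tdDir, norm_smul, norm_smul, Real.norm_eq_abs, Real.norm_eq_abs, abs_of_nonneg hlam]
    _ ≤ (1 + 2 * ‖w‖) * 1 + lam * ‖w‖ := by gcongr
    _ = 1 + (2 + lam) * ‖w‖ := by ring

section LinearGrowth

variable {E : Type*} [NormedAddCommGroup E]

theorem norm_le_one_add_mul_norm_sub_add {g w v : E} {K ζ : ℝ} (hK : 0 ≤ K)
    (hg : ‖g‖ ≤ 1 + K * ‖w‖) (hv : ‖v‖ ≤ ζ) (hζ : 1 ≤ ζ) :
    ‖g‖ ≤ (1 + K) * (‖w - v‖ + ζ) := by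
  have hw : ‖w‖ ≤ ‖w - v‖ + ζ := (norm_le_norm_sub_add w v).trans (by gcongr)
  nlinarith [norm_nonneg (w - v)]

theorem norm_add_smul_sub_add_le [NormedSpace ℝ E] {w v g : E} {η η₀ c ζ : ℝ} (hη : 0 ≤ η)
    (hηη₀ : η ≤ η₀) (hg : ‖g‖ ≤ c * (‖w - v‖ + ζ)) :
    ‖w + η • g - v‖ + ζ ≤ (1 + c * η₀) * (‖w - v‖ + ζ) := by
  have hstep : ‖w + η • g - v‖ ≤ ‖w - v‖ + η * ‖g‖ :=
    calc ‖w + η • g - v‖ = ‖(w - v) + η • g‖ := by rw [add_sub_right_comm]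
      _ ≤ ‖w - v‖ + ‖η • g‖ := norm_add_le _ _
      _ = ‖w - v‖ + η * ‖g‖ := by rw [norm_smul, Real.norm_of_nonneg hη]
  have hηg : η * ‖g‖ ≤ η₀ * (c * (‖w - v‖ + ζ)) :=
    mul_le_mul hηη₀ hg (norm_nonneg g) (hη.trans hηη₀)
  linarith

theorem le_exp_mul_of_le_one_add_mul {x : ℕ → ℝ} {c : ℝ} {n₀ : ℕ} (hx : ∀ n, 0 ≤ x n)
    (hstep : ∀ n, n₀ ≤ n → x (n + 1) ≤ (1 + c) * x n) (k : ℕ) :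
    x (n₀ + k) ≤ exp (c * k) * x n₀ := by
  induction k with
  | zero => simp
  | succ k ih =>
    calc x (n₀ + (k + 1)) ≤ (1 + c) * x (n₀ + k) := hstep _ (Nat.le_add_right _ _)
      _ ≤ exp c * (exp (c * k) * x n₀) := by
        rw [add_comm 1 c]
        exact mul_le_mul (add_one_le_exp c) ih (hx _) (exp_nonneg c)
      _ = exp (c * ↑(k + 1)) * x n₀ := by
        rw [← mul_assoc, ← exp_add]
        push_cast
        ring_nf

theorem norm_sub_add_le_exp_of_linear_growth [NormedSpace ℝ E] {w : ℕ → E} {G : ℕ → E → E}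
    {η : ℕ → ℝ} {n₀ : ℕ} {K η₀ ζ : ℝ} (v : E) (hK : 0 ≤ K) (hG : ∀ n x, ‖G n x‖ ≤ 1 + K * ‖x‖)
    (hη : ∀ n, 0 ≤ η n ∧ η n ≤ η₀) (hv : ‖v‖ ≤ ζ) (hζ : 1 ≤ ζ)
    (hrec : ∀ n, n₀ ≤ n → w (n + 1) = w n + η n • G n (w n)) (k : ℕ) :
    ‖w (n₀ + k) - v‖ + ζ ≤ exp ((1 + K) * η₀ * k) * (‖w n₀ - v‖ + ζ) := by
  refine le_exp_mul_of_le_one_add_mul (x := fun n => ‖w n - v‖ + ζ)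
    (fun n => add_nonneg (norm_nonneg _) (by linarith)) (fun n hn => ?_) k
  rw [hrec n hn]
  exact norm_add_smul_sub_add_le (hη n).1 (hη n).2
    (norm_le_one_add_mul_norm_sub_add hK (hG n (w n)) hv hζ)

end LinearGrowth

theorem nat_le_log_div_log_inv_of_lt_mul_pow {m ρ ε : ℝ} {k : ℕ} (hε : 0 < ε) (hρ0 : 0 < ρ)
    (hρ1 : ρ < 1) (h : ε < m * ρ ^ k) :
    (k : ℝ) ≤ log (m / ε) / log (1 / ρ) := by
  have hm : 0 < m := pos_of_mul_pos_left (hε.trans h) (pow_nonneg hρ0.le k)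
  have hlog := log_lt_log hε h
  rw [log_mul hm.ne' (pow_pos hρ0 k).ne', log_pow] at hlog
  rw [le_div_iff₀ (log_pos (one_lt_one_div hρ0 hρ1)),
    log_div hm.ne' hε.ne', one_div, log_inv]
  linarith

/-- The paper's `ln T'` with `T' = T / η₀` is bounded by `2 ln T`, since `1 / η₀ ≤ T`. -/
theorem nat_le_of_threshold_lt_mul_pow {m ρ C η₀ T : ℝ} {k : ℕ} (hC : 0 < C) (hη₀ : 0 < η₀)
    (hT : 1 / η₀ ≤ T) (hρ0 : 0 < ρ) (hρ1 : ρ < 1) (h : η₀ / (C * T) < m * ρ ^ k) :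
    (k : ℝ) ≤ log (C * m) / log (1 / ρ) + 2 * (1 / log (1 / ρ)) * log T := by
  have hT0 : 0 < T := (one_div_pos.mpr hη₀).trans_le hT
  have hm : 0 < m := pos_of_mul_pos_left ((by positivity : 0 < η₀ / (C * T)).trans h)
    (pow_nonneg hρ0.le k)
  have hk := nat_le_log_div_log_inv_of_lt_mul_pow (by positivity) hρ0 hρ1 h
  have hsplit : log (m / (η₀ / (C * T))) = log (C * m) + log T + log (1 / η₀) := by
    rw [show m / (η₀ / (C * T)) = C * m * T * (1 / η₀) by field_simp,
      log_mul (by positivity) (by positivity), log_mul (by positivity) (by positivity)]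
  have hlog : log (1 / η₀) ≤ log T := log_le_log (by positivity) hT
  have hL : 0 < log (1 / ρ) := log_pos (one_lt_one_div hρ0 hρ1)
  calc (k : ℝ) ≤ log (m / (η₀ / (C * T))) / log (1 / ρ) := hk
    _ ≤ (log (C * m) + 2 * log T) / log (1 / ρ) := by gcongr; linarith
    _ = _ := by ring

theorem mul_le_three_sixteenths_mul_max {η κ ℓ a b : ℝ} (hη : 0 ≤ η) (hη16 : η ≤ 1 / 16)
    (hηℓ : η * ℓ ≤ 1 / 16) (ha : 0 ≤ a) (hκ : κ ≤ b + 2 * a * ℓ) :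
    η * κ ≤ 3 / 16 * max a b := by
  have haM : a ≤ max a b := le_max_left a b
  have hbM : b ≤ max a b := le_max_right a b
  nlinarith [mul_le_mul_of_nonneg_left hκ hη, mul_le_mul_of_nonneg_left hbM hη,
    mul_le_mul_of_nonneg_left hηℓ ha]

theorem one_le_log_of_three_le {T : ℝ} (hT : 3 ≤ T) : 1 ≤ log T := by
  rw [le_log_iff_exp_le (by linarith)]
  linarith [exp_one_lt_three]

theorem reg_td0_base_case_bounded_general
    {S : Type*} {d : ℕ}
    (φ : S → EuclideanSpace ℝ (Fin d))
    (r : S → ℝ) (γ lam : ℝ) (wr : EuclideanSpace ℝ (Fin d))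
    (hφ : ∀ s, ‖φ s‖ ≤ 1)
    (hr : ∀ s, 0 ≤ r s ∧ r s ≤ 1)
    (hγ : 0 < γ ∧ γ ≤ 1)
    (hlam : 0 ≤ lam)
    -- geometric mixing with constants `m`, `ρ`, and `a = 1/ln(1/ρ)`,
    -- `b = ln(2(2+λ)m)/ln(1/ρ)`
    (m ρ : ℝ) (hρ : 0 < ρ ∧ ρ < 1)
    (a b : ℝ)
    (ha : a = 1 / Real.log (1 / ρ))
    (hb : b = Real.log (2 * (2 + lam) * m) / Real.log (1 / ρ))
    -- horizon and exponential step-size schedule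
    (T : ℕ) (η₀ α : ℝ)
    (hα : α = (1 / (T : ℝ)) ^ ((1 : ℝ) / (T : ℝ)))
    (hη₀pos : 0 < η₀)
    (hη₀ : η₀ ≤ (1 - γ) / (16 * Real.log T))
    (hT3 : (3 : ℝ) ≤ (T : ℝ)) (hTη : 1 / η₀ ≤ (T : ℝ))
    -- the mixing time `τ_mix = min{t ∈ ℕ : m ρ^t ≤ η₀/(2(2+λ)T)}`
    (τmix : ℕ)
    (hτmixMin : ∀ t : ℕ, t < τmix → η₀ / (2 * (2 + lam) * T) < m * ρ ^ t)
    -- an arbitrary sequence of transitions and the corresponding iterates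
    (st : ℕ → S × S) (w : ℕ → EuclideanSpace ℝ (Fin d))
    (hrec : ∀ t, 1 ≤ t →
      w (t + 1) = w t + (η₀ * α ^ t) • regTdDir φ r γ lam (st t).1 (st t).2 (w t)) :
    ∀ t, 1 ≤ t → t ≤ τmix →
      ‖w t - wr‖ ^ 2 ≤
        Real.exp (2 * (2 + lam) * max a b) * (‖w 1 - wr‖ + max 1 ‖wr‖) ^ 2 := by
  intro t ht1 htτ
  obtain ⟨k, rfl⟩ : ∃ k, t = 1 + k := ⟨t - 1, by omega⟩
  have hα01 : 0 ≤ α ∧ α ≤ 1 := by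
    rw [hα]
    exact ⟨by positivity, rpow_le_one (by positivity) (by rw [div_le_one] <;> linarith)
      (by positivity)⟩
  have hgrowth := norm_sub_add_le_exp_of_linear_growth wr (by linarith)
    (fun n => norm_regTdDir_le (hφ (st n).1) (hφ (st n).2)
      (abs_le.2 ⟨by linarith [hr (st n).1], (hr _).2⟩) (abs_le.2 ⟨by linarith, hγ.2⟩) hlam)
    (fun n => ⟨mul_nonneg hη₀pos.le (pow_nonneg hα01.1 n),
      mul_le_of_le_one_right hη₀pos.le (pow_le_one₀ hα01.1 hα01.2)⟩)
    (le_max_right 1 ‖wr‖) (le_max_left 1 ‖wr‖) hrec k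
  have hlogT := one_le_log_of_three_le hT3
  have hηlog : η₀ * log T ≤ 1 / 16 := by
    rw [le_div_iff₀ (by positivity)] at hη₀
    linarith
  have hk : (k : ℝ) ≤ b + 2 * a * log T := ha ▸ hb ▸ nat_le_of_threshold_lt_mul_pow
    (by linarith) hη₀pos hTη hρ.1 hρ.2 (hτmixMin k (by omega))
  have ha0 : 0 < a := ha ▸ one_div_pos.2 (log_pos (one_lt_one_div hρ.1 hρ.2))
  have hηk := mul_le_three_sixteenths_mul_max hη₀pos.le (by nlinarith) hηlog ha0.le hk
  have hM : 0 ≤ max a b := ha0.le.trans (le_max_left a b)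
  calc ‖w (1 + k) - wr‖ ^ 2 ≤ (‖w (1 + k) - wr‖ + max 1 ‖wr‖) ^ 2 := by
        gcongr; exact le_add_of_nonneg_right (zero_le_one.trans (le_max_left _ _))
    _ ≤ (exp ((1 + (2 + lam)) * η₀ * k) * (‖w 1 - wr‖ + max 1 ‖wr‖)) ^ 2 := by gcongr
    _ = exp (2 * ((3 + lam) * (η₀ * k))) * (‖w 1 - wr‖ + max 1 ‖wr‖) ^ 2 := by
        rw [mul_pow, ← exp_nat_mul]; ring_nf
    _ ≤ exp (2 * (2 + lam) * max a b) * (‖w 1 - wr‖ + max 1 ‖wr‖) ^ 2 := by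
        -- `3 (3 + λ) / 16 ≤ 2 + λ`
        gcongr exp ?_ * _; nlinarith

/-- base case — regularized TD(0) iterates with exponential step-sizes
`η_t = η₀ α^t`, `α = (1/T)^{1/T}`, `η₀ ≤ (1−γ)/(16 ln T)`, `T ≥ max{3, 1/η₀}`, stay
bounded up to the mixing time: for all `1 ≤ t ≤ τ_mix`,
`‖w_t − w_r*‖² ≤ B(τ_mix) = exp(2(2+λ) max{a,b}) (‖w₁ − w_r*‖ + ζ)²`. -/
theorem reg_td0_base_case_bounded
    {S : Type*} [Fintype S] {d : ℕ}
    (P : S → S → ℝ) (μ : S → ℝ) (φ : S → EuclideanSpace ℝ (Fin d))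
    (r : S → ℝ) (γ lam : ℝ) (wr : EuclideanSpace ℝ (Fin d))
    (hP : ∀ s s', 0 ≤ P s s') (hProw : ∀ s, ∑ s', P s s' = 1)
    (hμ : ∀ s, 0 ≤ μ s) (hμsum : ∑ s, μ s = 1)
    (hstat : ∀ s', ∑ s, μ s * P s s' = μ s')
    (hφ : ∀ s, ‖φ s‖ ≤ 1)
    (hr : ∀ s, 0 ≤ r s ∧ r s ≤ 1)
    (hγ : 0 < γ ∧ γ ≤ 1)
    (hlam : 0 ≤ lam)
    (hwr : regMeanDir P μ φ r γ lam wr = 0)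
    -- geometric mixing with constants `m`, `ρ`, and `a = 1/ln(1/ρ)`,
    -- `b = ln(2(2+λ)m)/ln(1/ρ)`
    (m ρ : ℝ) (hm : 0 < m) (hρ : 0 < ρ ∧ ρ < 1)
    (hmix : ∀ ν : S → ℝ, (∀ s, 0 ≤ ν s) → ∑ s, ν s = 1 →
      ∀ t : ℕ, (1 / 2) * ∑ s, |(pushDist P)^[t] ν s - μ s| ≤ m * ρ ^ t)
    (a b : ℝ)
    (ha : a = 1 / Real.log (1 / ρ))
    (hb : b = Real.log (2 * (2 + lam) * m) / Real.log (1 / ρ))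
    -- horizon and exponential step-size schedule
    (T : ℕ) (η₀ α : ℝ)
    (hα : α = (1 / (T : ℝ)) ^ ((1 : ℝ) / (T : ℝ)))
    (hη₀pos : 0 < η₀)
    (hη₀ : η₀ ≤ (1 - γ) / (16 * Real.log T))
    (hT3 : (3 : ℝ) ≤ (T : ℝ)) (hTη : 1 / η₀ ≤ (T : ℝ))
    -- the mixing time `τ_mix = min{t ∈ ℕ : m ρ^t ≤ η₀/(2(2+λ)T)}`
    (τmix : ℕ)
    (hτmix : m * ρ ^ τmix ≤ η₀ / (2 * (2 + lam) * T))
    (hτmixMin : ∀ t : ℕ, t < τmix → η₀ / (2 * (2 + lam) * T) < m * ρ ^ t)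
    -- an arbitrary sequence of transitions and the corresponding iterates
    (st : ℕ → S × S) (w : ℕ → EuclideanSpace ℝ (Fin d))
    (hrec : ∀ t, 1 ≤ t →
      w (t + 1) = w t + (η₀ * α ^ t) • regTdDir φ r γ lam (st t).1 (st t).2 (w t)) :
    ∀ t, 1 ≤ t → t ≤ τmix →
      ‖w t - wr‖ ^ 2 ≤
        Real.exp (2 * (2 + lam) * max a b) * (‖w 1 - wr‖ + max 1 ‖wr‖) ^ 2 :=
  reg_td0_base_case_bounded_general φ r γ lam wr hφ hr hγ hlam m ρ hρ a b ha hb T η₀ α hα hη₀pos hη₀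
    hT3 hTη τmix hτmixMin st w hrec
end
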